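/- arXiv:2002.06582 — 2 statements merged into one kernel-verified Lean document; each statement's English description precedes it below -/
import Mathlib

section
/- Let n ≥ 1 and s ∈ (0,1]. Set ⟨x⟩ = (1 + (|x| - 1)^4)^{1/4} for x ∈ ℝⁿ, and define φ : ℝⁿ → ℝ by φ(x) = 1 if |x| ≤ 1 and φ(x) = ⟨x⟩^{-n-2s} if |x| ≥ 1. Then φ is twice continuously differentiable on ℝⁿ, and φ, its gradient, and its second derivatives are all bounded on ℝⁿ. -/
open MeasureTheory Real Set

/-- The Japanese-bracket-type weight `⟨x⟩ = (1 + (|x| - 1)^4)^{1/4}`. -/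
noncomputable def jbr {n : ℕ} (x : EuclideanSpace ℝ (Fin n)) : ℝ :=
  (1 + (‖x‖ - 1) ^ 4) ^ ((1 : ℝ) / 4)

/-- The test function `φ(x) = 1` if `|x| ≤ 1`, `φ(x) = ⟨x⟩^{-n-2s}` if `|x| ≥ 1`. -/
noncomputable def phi (n : ℕ) (s : ℝ) (x : EuclideanSpace ℝ (Fin n)) : ℝ :=
  if ‖x‖ ≤ 1 then 1 else jbr x ^ (-((n : ℝ) + 2 * s))

/-! With `p = -(n + 2s)/4 ≤ 0` we have `φ(x) = h(‖x‖)` for the profile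
`h(t) = (1 + max(t - 1, 0)^4)^p`. The profile is `C²` because `t ↦ max(t, 0)^4` is, and its
first two derivatives are bounded because every power `m^k` with `k ≤ 4j` that differentiation
produces is absorbed by the accompanying factor `(1 + m^4)^(p - j)`. Since `h` is constant on
`(-∞, 1]`, `h ∘ √` is smooth at the origin too, and `φ = (h ∘ √) ∘ ‖·‖²` lets the chain rule
give `‖Dφ(x)‖ ≤ |h'(‖x‖)|` and `‖D²φ(x)‖ ≤ 2|h'(‖x‖)| + |h''(‖x‖)|`. -/

open Filter Topology

theorem hasDerivAt_max_zero_pow {k : ℕ} (hk : 2 ≤ k) (x : ℝ) :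
    HasDerivAt (fun t : ℝ => max t 0 ^ k) (k * max x 0 ^ (k - 1)) x := by
  rcases lt_trichotomy x 0 with hx | rfl | hx
  · have hzero : (fun t : ℝ => max t 0 ^ k) =ᶠ[𝓝 x] fun _ => 0 := by
      filter_upwards [Iio_mem_nhds hx] with t ht
      rw [max_eq_right (le_of_lt ht), zero_pow (by omega)]
    rw [max_eq_right hx.le, zero_pow (by omega), mul_zero]
    exact (hasDerivAt_const x 0).congr_of_eventuallyEq hzero
  · rw [hasDerivAt_iff_isLittleO_nhds_zero]
    simp only [max_self, zero_add, zero_pow (show k ≠ 0 by omega), sub_zero,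
      zero_pow (show k - 1 ≠ 0 by omega), mul_zero, smul_zero]
    refine (Asymptotics.IsBigO.of_bound 1 (Eventually.of_forall fun t => ?_)).trans_isLittleO
      (Asymptotics.isLittleO_pow_id (by omega : 1 < k))
    rw [one_mul, norm_pow, norm_pow]
    gcongr
    rw [Real.norm_of_nonneg (le_max_right t 0)]
    exact max_le (Real.le_norm_self t) (norm_nonneg t)
  · have hpow : (fun t : ℝ => max t 0 ^ k) =ᶠ[𝓝 x] fun t => t ^ k := by
      filter_upwards [Ioi_mem_nhds hx] with t ht
      rw [max_eq_left (le_of_lt ht)]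
    rw [max_eq_left hx.le]
    exact (hasDerivAt_pow k x).congr_of_eventuallyEq hpow

theorem contDiff_max_zero_pow : ∀ {m k : ℕ}, m < k → ContDiff ℝ m (fun t : ℝ => max t 0 ^ k)
  | 0, _, _ => contDiff_zero.2 (by fun_prop)
  | m + 1, k, hmk => by
    have hderiv : deriv (fun t : ℝ => max t 0 ^ k) = fun t : ℝ => (k : ℝ) * max t 0 ^ (k - 1) :=
      funext fun t => (hasDerivAt_max_zero_pow (by omega) t).deriv
    push_cast
    refine contDiff_succ_iff_deriv.2
      ⟨fun t => (hasDerivAt_max_zero_pow (by omega) t).differentiableAt, by simp, ?_⟩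
    rw [hderiv]
    exact contDiff_const.mul (contDiff_max_zero_pow (by omega))

theorem pow_mul_one_add_pow_four_rpow_le_one {r p : ℝ} {k j : ℕ} (hr : 0 ≤ r) (hp : p ≤ 0)
    (hkj : k ≤ 4 * j) : r ^ k * (1 + r ^ 4) ^ (p - j) ≤ 1 := by
  have hA : 0 < 1 + r ^ 4 := by positivity
  have hpow : r ^ k ≤ (1 + r ^ 4) ^ j := by
    rcases le_total r 1 with hr1 | hr1
    · exact (pow_le_one₀ hr hr1).trans (one_le_pow₀ (by linarith [pow_nonneg hr 4]))
    · calc r ^ k ≤ r ^ (4 * j) := pow_le_pow_right₀ hr1 hkj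
        _ = (r ^ 4) ^ j := pow_mul r 4 j
        _ ≤ (1 + r ^ 4) ^ j := by gcongr; linarith
  calc r ^ k * (1 + r ^ 4) ^ (p - j) ≤ (1 + r ^ 4) ^ j * (1 + r ^ 4) ^ (p - j) := by gcongr
    _ = (1 + r ^ 4) ^ p := by rw [← Real.rpow_natCast, ← Real.rpow_add hA, add_sub_cancel]
    _ ≤ 1 := Real.rpow_le_one_of_one_le_of_nonpos (by linarith [pow_nonneg hr 4]) hp

theorem hasDerivAt_max_sub_one_pow {k : ℕ} (hk : 2 ≤ k) (t : ℝ) :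
    HasDerivAt (fun t : ℝ => max (t - 1) 0 ^ k) (k * max (t - 1) 0 ^ (k - 1)) t :=
  (hasDerivAt_max_zero_pow hk (t - 1)).comp_sub_const t 1

theorem abs_mul_le_abs_of_le_one (a : ℝ) {w : ℝ} (hw₀ : 0 ≤ w) (hw₁ : w ≤ 1) : |a * w| ≤ |a| := by
  rw [abs_mul, abs_of_nonneg hw₀]
  exact mul_le_of_le_one_right (abs_nonneg a) hw₁

section CompNormSq

variable {E : Type*} [NormedAddCommGroup E] [InnerProductSpace ℝ E] {G : ℝ → ℝ}

theorem hasFDerivAt_comp_norm_sq {x : E} (hG : DifferentiableAt ℝ G (‖x‖ ^ 2)) :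
    HasFDerivAt (fun y : E => G (‖y‖ ^ 2)) ((2 * deriv G (‖x‖ ^ 2)) • innerSL ℝ x) x := by
  refine (hG.hasDerivAt.comp_hasFDerivAt x (hasStrictFDerivAt_norm_sq x).hasFDerivAt).congr_fderiv
    ?_
  module

theorem norm_fderiv_comp_norm_sq {x : E} (hG : DifferentiableAt ℝ G (‖x‖ ^ 2)) :
    ‖fderiv ℝ (fun y : E => G (‖y‖ ^ 2)) x‖ = 2 * |deriv G (‖x‖ ^ 2)| * ‖x‖ := by
  rw [(hasFDerivAt_comp_norm_sq hG).fderiv, norm_smul, innerSL_apply_norm, Real.norm_eq_abs,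
    abs_mul, abs_two]

theorem norm_iteratedFDeriv_two_comp_norm_sq_le (hG : ContDiff ℝ 2 G) (x : E) :
    ‖iteratedFDeriv ℝ 2 (fun y : E => G (‖y‖ ^ 2)) x‖ ≤
      2 * |deriv G (‖x‖ ^ 2)| + 4 * |deriv (deriv G) (‖x‖ ^ 2)| * ‖x‖ ^ 2 := by
  set B : E →L[ℝ] E →L[ℝ] ℝ := innerSL ℝ
  have hfderiv : (fderiv ℝ fun y : E => G (‖y‖ ^ 2)) = fun y => (2 * deriv G (‖y‖ ^ 2)) • B y :=
    funext fun y => (hasFDerivAt_comp_norm_sq ((hG.differentiable two_ne_zero) _)).fderiv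
  have hcoeff := (hasFDerivAt_comp_norm_sq (x := x)
    ((hG.deriv'.differentiable one_ne_zero) _)).const_mul 2
  have hhess : fderiv ℝ (fderiv ℝ fun y : E => G (‖y‖ ^ 2)) x =
      (2 * deriv G (‖x‖ ^ 2)) • B + ((4 * deriv (deriv G) (‖x‖ ^ 2)) • B x).smulRight (B x) := by
    rw [hfderiv, (hcoeff.fun_smul B.hasFDerivAt).fderiv, smul_smul]
    congr 3
    ring
  rw [← norm_iteratedFDeriv_fderiv, norm_iteratedFDeriv_one, hhess]
  refine (norm_add_le _ _).trans (add_le_add ?_ ?_)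
  · rw [norm_smul, Real.norm_eq_abs, abs_mul, abs_two]
    exact mul_le_of_le_one_right (by positivity) (norm_innerSL_le ℝ)
  · rw [ContinuousLinearMap.norm_smulRight_apply, norm_smul, innerSL_apply_norm,
      Real.norm_eq_abs, abs_mul, abs_of_pos four_pos]
    exact le_of_eq (by ring)

end CompNormSq

section CompSqrt

variable {h : ℝ → ℝ} {r : ℝ}

theorem comp_sqrt_eventuallyEq_const (hr : 0 < r) (hc : ∀ t ≤ r, h t = h r) {u : ℝ}
    (hu : u < r ^ 2) : (fun v => h √v) =ᶠ[𝓝 u] fun _ => h r := by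
  filter_upwards [Iio_mem_nhds hu] with v hv
  exact hc _ ((Real.sqrt_lt' hr).2 hv).le

theorem deriv_comp_sqrt_of_lt (hr : 0 < r) (hc : ∀ t ≤ r, h t = h r) {u : ℝ}
    (hu : u < r ^ 2) : deriv (fun v => h √v) u = 0 := by
  rw [(comp_sqrt_eventuallyEq_const hr hc hu).deriv_eq, deriv_const]

theorem deriv_deriv_comp_sqrt_of_lt (hr : 0 < r) (hc : ∀ t ≤ r, h t = h r) {u : ℝ}
    (hu : u < r ^ 2) : deriv (deriv fun v => h √v) u = 0 := by
  rw [(comp_sqrt_eventuallyEq_const hr hc hu).deriv.deriv_eq, deriv_const', deriv_const]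

theorem contDiff_comp_sqrt {n : WithTop ℕ∞} (hh : ContDiff ℝ n h) (hr : 0 < r)
    (hc : ∀ t ≤ r, h t = h r) : ContDiff ℝ n fun u => h √u := by
  refine contDiff_iff_contDiffAt.2 fun u => ?_
  rcases lt_or_ge u (r ^ 2) with hu | hu
  · exact contDiffAt_const.congr_of_eventuallyEq (comp_sqrt_eventuallyEq_const hr hc hu)
  · exact hh.contDiffAt.comp u (Real.contDiffAt_sqrt ((pow_pos hr 2).trans_le hu).ne')

theorem hasDerivAt_comp_sqrt {u : ℝ} (hu : 0 < u) (hd : DifferentiableAt ℝ h √u) :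
    HasDerivAt (fun v => h √v) (deriv h √u / (2 * √u)) u := by
  refine (hd.hasDerivAt.comp u (Real.hasDerivAt_sqrt hu.ne')).congr_deriv ?_
  field_simp

theorem hasDerivAt_deriv_comp_sqrt (hh : ContDiff ℝ 2 h) {u : ℝ} (hu : 0 < u) :
    HasDerivAt (deriv fun v => h √v)
      ((deriv (deriv h) √u - deriv h √u / √u) / (4 * u)) u := by
  have hd : Differentiable ℝ h := hh.differentiable two_ne_zero
  have hd' : Differentiable ℝ (deriv h) := hh.deriv'.differentiable one_ne_zero
  have hderiv : (deriv fun v => h √v) =ᶠ[𝓝 u] fun v => deriv h √v / (2 * √v) := by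
    filter_upwards [Ioi_mem_nhds hu] with v hv
    exact (hasDerivAt_comp_sqrt hv (hd _)).deriv
  have hsqrt := Real.hasDerivAt_sqrt hu.ne'
  have hs : 0 < √u := Real.sqrt_pos.2 hu
  have hquot := ((hd' _).hasDerivAt.comp u hsqrt).div (hsqrt.const_mul 2) (by positivity)
  refine (hquot.congr_of_eventuallyEq hderiv).congr_deriv ?_
  have hsq : u = √u ^ 2 := (Real.sq_sqrt hu.le).symm
  simp only [Function.comp_apply]
  set s := √u
  rw [hsq]
  field_simp
  ring

end CompSqrt

theorem comp_norm_eq_comp_sqrt_norm_sq {F : Type*} [SeminormedAddCommGroup F] (h : ℝ → ℝ) :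
    (fun x : F => h ‖x‖) = fun x => h √(‖x‖ ^ 2) := by
  simp only [Real.sqrt_sq (norm_nonneg _)]

section CompNorm

variable {E : Type*} [NormedAddCommGroup E] [InnerProductSpace ℝ E] {h : ℝ → ℝ} {r : ℝ}

theorem contDiff_comp_norm {n : WithTop ℕ∞} (hh : ContDiff ℝ n h) (hr : 0 < r)
    (hc : ∀ t ≤ r, h t = h r) : ContDiff ℝ n fun x : E => h ‖x‖ := by
  rw [comp_norm_eq_comp_sqrt_norm_sq]
  exact (contDiff_comp_sqrt hh hr hc).comp (contDiff_norm_sq ℝ)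

theorem norm_fderiv_comp_norm_le (hh : ContDiff ℝ 1 h) (hr : 0 < r)
    (hc : ∀ t ≤ r, h t = h r) (x : E) :
    ‖fderiv ℝ (fun y : E => h ‖y‖) x‖ ≤ |deriv h ‖x‖| := by
  rw [comp_norm_eq_comp_sqrt_norm_sq, norm_fderiv_comp_norm_sq
    ((contDiff_comp_sqrt hh hr hc).differentiable one_ne_zero _)]
  rcases lt_or_ge ‖x‖ r with hx | hx
  · rw [deriv_comp_sqrt_of_lt hr hc (by gcongr)]
    simp
  · have hx₀ : 0 < ‖x‖ := hr.trans_le hx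
    rw [(hasDerivAt_comp_sqrt (by positivity) (hh.differentiable one_ne_zero _)).deriv,
      Real.sqrt_sq hx₀.le, abs_div, abs_mul, abs_two, abs_of_pos hx₀]
    exact le_of_eq (by field_simp)

theorem norm_iteratedFDeriv_two_comp_norm_le (hh : ContDiff ℝ 2 h) (hr : 0 < r)
    (hc : ∀ t ≤ r, h t = h r) (x : E) :
    ‖iteratedFDeriv ℝ 2 (fun y : E => h ‖y‖) x‖ ≤
      2 * |deriv h ‖x‖| / r + |deriv (deriv h) ‖x‖| := by
  rw [comp_norm_eq_comp_sqrt_norm_sq]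
  refine (norm_iteratedFDeriv_two_comp_norm_sq_le (contDiff_comp_sqrt hh hr hc) x).trans ?_
  rcases lt_or_ge ‖x‖ r with hx | hx
  · have hx2 : ‖x‖ ^ 2 < r ^ 2 := by gcongr
    rw [deriv_comp_sqrt_of_lt hr hc hx2, deriv_deriv_comp_sqrt_of_lt hr hc hx2]
    simp only [abs_zero, mul_zero, zero_mul, add_zero]
    positivity
  · have hx₀ : 0 < ‖x‖ := hr.trans_le hx
    rw [(hasDerivAt_comp_sqrt (by positivity) (hh.differentiable two_ne_zero _)).deriv,
      (hasDerivAt_deriv_comp_sqrt hh (by positivity)).deriv, Real.sqrt_sq hx₀.le]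
    set t := ‖x‖
    have h₁ : 2 * |deriv h t / (2 * t)| = |deriv h t| / t := by
      rw [abs_div, abs_mul, abs_two, abs_of_pos hx₀]
      field_simp
    have h₂ : 4 * |(deriv (deriv h) t - deriv h t / t) / (4 * t ^ 2)| * t ^ 2 =
        |deriv (deriv h) t - deriv h t / t| := by
      rw [abs_div, abs_mul, abs_of_pos (by norm_num : (0 : ℝ) < 4),
        abs_of_pos (by positivity : 0 < t ^ 2)]
      field_simp
    have h₃ : |deriv (deriv h) t - deriv h t / t| ≤ |deriv (deriv h) t| + |deriv h t| / t :=
      (abs_sub _ _).trans_eq (by rw [abs_div, abs_of_pos hx₀])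
    have h₄ : |deriv h t| / t ≤ |deriv h t| / r := div_le_div_of_nonneg_left (abs_nonneg _) hr hx
    rw [h₁, h₂, mul_div_assoc]
    linarith

end CompNorm

noncomputable def phiProfile (p t : ℝ) : ℝ := (1 + max (t - 1) 0 ^ 4) ^ p

section Profile

variable {p : ℝ}

theorem phiProfile_of_le_one {t : ℝ} (ht : t ≤ 1) : phiProfile p t = 1 := by
  rw [phiProfile, max_eq_right (by linarith), zero_pow (by norm_num), add_zero, Real.one_rpow]

theorem abs_phiProfile_le_one (hp : p ≤ 0) (t : ℝ) : |phiProfile p t| ≤ 1 := by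
  have hA : 1 ≤ 1 + max (t - 1) 0 ^ 4 := by linarith [pow_nonneg (le_max_right (t - 1) 0) 4]
  rw [phiProfile, abs_of_nonneg (Real.rpow_nonneg (by linarith) p)]
  exact Real.rpow_le_one_of_one_le_of_nonpos hA hp

theorem contDiff_phiProfile (p : ℝ) : ContDiff ℝ 2 (phiProfile p) := by
  have hm : ContDiff ℝ 2 fun t : ℝ => max (t - 1) 0 ^ 4 :=
    (contDiff_max_zero_pow (by norm_num)).comp (contDiff_id.sub contDiff_const)
  exact (contDiff_const.add hm).rpow_const_of_ne fun _ => by positivity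

theorem hasDerivAt_phiProfile (p t : ℝ) :
    HasDerivAt (phiProfile p)
      (4 * p * max (t - 1) 0 ^ 3 * (1 + max (t - 1) 0 ^ 4) ^ (p - 1)) t := by
  refine (((hasDerivAt_max_sub_one_pow (k := 4) (by norm_num) t).const_add 1).rpow_const
    (p := p) (Or.inl (by positivity))).congr_deriv ?_
  push_cast
  ring

theorem deriv_phiProfile (p : ℝ) : deriv (phiProfile p) =
    fun t => 4 * p * max (t - 1) 0 ^ 3 * (1 + max (t - 1) 0 ^ 4) ^ (p - 1) :=
  funext fun t => (hasDerivAt_phiProfile p t).deriv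

theorem hasDerivAt_deriv_phiProfile (p t : ℝ) :
    HasDerivAt (deriv (phiProfile p))
      (12 * p * max (t - 1) 0 ^ 2 * (1 + max (t - 1) 0 ^ 4) ^ (p - 1) +
        16 * p * (p - 1) * max (t - 1) 0 ^ 6 * (1 + max (t - 1) 0 ^ 4) ^ (p - 2)) t := by
  have hA := ((hasDerivAt_max_sub_one_pow (k := 4) (by norm_num) t).const_add 1).rpow_const
    (p := p - 1) (Or.inl (by positivity))
  have hsplit : (1 + max (t - 1) 0 ^ 4) ^ (p - 1) =
      (1 + max (t - 1) 0 ^ 4) ^ (p - 2) * (1 + max (t - 1) 0 ^ 4) := by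
    rw [← Real.rpow_add_one (by positivity)]; ring_nf
  rw [deriv_phiProfile]
  refine (((hasDerivAt_max_sub_one_pow (k := 3) (by norm_num) t).const_mul (4 * p)).mul
    hA).congr_deriv ?_
  push_cast
  rw [hsplit, show p - 1 - 1 = p - 2 by ring]
  ring

theorem abs_deriv_phiProfile_le (hp : p ≤ 0) (t : ℝ) : |deriv (phiProfile p) t| ≤ 4 * |p| := by
  have h3 := pow_mul_one_add_pow_four_rpow_le_one (k := 3) (j := 1) (le_max_right (t - 1) 0) hp
    (by norm_num)
  rw [Nat.cast_one] at h3
  calc |deriv (phiProfile p) t|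
      = |4 * p * (max (t - 1) 0 ^ 3 * (1 + max (t - 1) 0 ^ 4) ^ (p - 1))| := by
        simp only [deriv_phiProfile, mul_assoc]
    _ ≤ |4 * p| := abs_mul_le_abs_of_le_one _ (by positivity) h3
    _ = 4 * |p| := by rw [abs_mul, abs_of_pos (by norm_num : (0 : ℝ) < 4)]

theorem abs_deriv_deriv_phiProfile_le (hp : p ≤ 0) (t : ℝ) :
    |deriv (deriv (phiProfile p)) t| ≤ 12 * |p| + 16 * |p * (p - 1)| := by
  have hm := le_max_right (t - 1) 0
  have h2 := pow_mul_one_add_pow_four_rpow_le_one (k := 2) (j := 1) hm hp (by norm_num)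
  have h6 := pow_mul_one_add_pow_four_rpow_le_one (k := 6) (j := 2) hm hp (by norm_num)
  rw [Nat.cast_one] at h2
  rw [Nat.cast_ofNat] at h6
  calc |deriv (deriv (phiProfile p)) t|
      ≤ |12 * p * (max (t - 1) 0 ^ 2 * (1 + max (t - 1) 0 ^ 4) ^ (p - 1))| +
          |16 * (p * (p - 1)) * (max (t - 1) 0 ^ 6 * (1 + max (t - 1) 0 ^ 4) ^ (p - 2))| := by
        rw [(hasDerivAt_deriv_phiProfile p t).deriv]
        exact le_of_eq_of_le (by ring_nf) (abs_add_le _ _)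
    _ ≤ |12 * p| + |16 * (p * (p - 1))| :=
        add_le_add (abs_mul_le_abs_of_le_one _ (by positivity) h2)
          (abs_mul_le_abs_of_le_one _ (by positivity) h6)
    _ = 12 * |p| + 16 * |p * (p - 1)| := by
        rw [abs_mul 12, abs_mul 16, abs_of_pos (by norm_num : (0 : ℝ) < 12),
          abs_of_pos (by norm_num : (0 : ℝ) < 16)]

end Profile

theorem phi_eq_phiProfile_norm (n : ℕ) (s : ℝ) :
    phi n s = fun x => phiProfile (-((n : ℝ) + 2 * s) / 4) ‖x‖ := by
  funext x
  rw [phi]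
  split_ifs with hx
  · exact (phiProfile_of_le_one hx).symm
  · rw [jbr, ← Real.rpow_mul (by positivity), phiProfile, max_eq_left (by linarith)]
    congr 1
    ring

theorem stmt_4_general (n : ℕ) (s : ℝ) (hs : s ∈ Set.Ioc (0 : ℝ) 1) :
    ContDiff ℝ 2 (phi n s) ∧
    ∃ C : ℝ, ∀ x : EuclideanSpace ℝ (Fin n),
      |phi n s x| ≤ C ∧ ‖fderiv ℝ (phi n s) x‖ ≤ C ∧
        ‖iteratedFDeriv ℝ 2 (phi n s) x‖ ≤ C := by
  have hp : -((n : ℝ) + 2 * s) / 4 ≤ 0 := by linarith [hs.1, (n.cast_nonneg : (0 : ℝ) ≤ n)]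
  set p := -((n : ℝ) + 2 * s) / 4
  have hc : ∀ t ≤ 1, phiProfile p t = phiProfile p 1 := fun t ht => by
    rw [phiProfile_of_le_one ht, phiProfile_of_le_one le_rfl]
  have h₁ := abs_deriv_phiProfile_le hp
  have h₂ := abs_deriv_deriv_phiProfile_le hp
  rw [phi_eq_phiProfile_norm]
  refine ⟨contDiff_comp_norm (contDiff_phiProfile p) one_pos hc,
    1 + 8 * |p| + (12 * |p| + 16 * |p * (p - 1)|), fun x => ⟨?_, ?_, ?_⟩⟩
  · linarith [abs_phiProfile_le_one hp ‖x‖, abs_nonneg p, abs_nonneg (p * (p - 1))]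
  · linarith [norm_fderiv_comp_norm_le ((contDiff_phiProfile p).of_le one_le_two) one_pos hc x,
      h₁ ‖x‖, abs_nonneg p, abs_nonneg (p * (p - 1))]
  · have := norm_iteratedFDeriv_two_comp_norm_le (contDiff_phiProfile p) one_pos hc x
    rw [div_one] at this
    linarith [h₁ ‖x‖, h₂ ‖x‖]

/-- For `n ≥ 1` and `s ∈ (0,1]`, the function `φ` is twice continuously
differentiable on `ℝⁿ`, and `φ`, its gradient and its second derivatives are
all bounded. -/
theorem stmt_4 (n : ℕ) (hn : 1 ≤ n) (s : ℝ) (hs : s ∈ Set.Ioc (0 : ℝ) 1) :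
    ContDiff ℝ 2 (phi n s) ∧
    ∃ C : ℝ, ∀ x : EuclideanSpace ℝ (Fin n),
      |phi n s x| ≤ C ∧ ‖fderiv ℝ (phi n s) x‖ ≤ C ∧
        ‖iteratedFDeriv ℝ 2 (phi n s) x‖ ≤ C :=
  stmt_4_general n s hs
end

section
/- Let n ≥ 1 and s ∈ (0,1). Set ⟨x⟩ = (1 + (|x| - 1)^4)^{1/4} for x ∈ ℝⁿ, and define φ : ℝⁿ → ℝ by φ(x) = 1 if |x| ≤ 1 and φ(x) = ⟨x⟩^{-n-2s} if |x| ≥ 1. Then there exists a constant C > 0 (depending only on n and s) such that for every x ∈ ℝⁿ with |x| ≥ 2, ∫_{|y| ≥ 2|x|} |φ(x+y) + φ(x-y) - 2φ(x)| / |y|^{n+2s} dy ≤ C ⟨x⟩^{-n-4s}. -/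
/-!
For `|y| ≥ 2|x|` both `x ± y` are at least as far from the origin as `x`, and `φ` is radially
non-increasing, so the second difference is bounded by `2 φ(x) = 2 ⟨x⟩^{-n-2s}`. By scaling,
`∫_{|y| ≥ R} |y|^{-n-2s} dy = c R^{-2s}`, and with `R = 2|x| ≥ ⟨x⟩` the extra factor `⟨x⟩^{-2s}`
turns `⟨x⟩^{-n-2s}` into `⟨x⟩^{-n-4s}`.
-/

open MeasureTheory Real Set

open Module (finrank)

section NormPowerTail

variable {E : Type*} [NormedAddCommGroup E] [NormedSpace ℝ E] [MeasurableSpace E] [BorelSpace E]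
  [FiniteDimensional ℝ E] (μ : Measure E) [μ.IsAddHaarMeasure]

theorem lintegral_norm_rpow_neg_tail (p : ℝ) {R : ℝ} (hR : 0 < R) :
    ∫⁻ y in {y : E | R ≤ ‖y‖}, ENNReal.ofReal (‖y‖ ^ (-p)) ∂μ =
      ENNReal.ofReal (R ^ ((finrank ℝ E : ℝ) - p)) *
        ∫⁻ y in {y : E | 1 ≤ ‖y‖}, ENNReal.ofReal (‖y‖ ^ (-p)) ∂μ := by
  have hpre : (R • ·) ⁻¹' {y : E | R ≤ ‖y‖} = {z | 1 ≤ ‖z‖} := by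
    ext z
    simp [norm_smul, abs_of_pos hR, hR]
  have hscale : ENNReal.ofReal (R ^ finrank ℝ E)⁻¹ *
        ∫⁻ y in {y : E | R ≤ ‖y‖}, ENNReal.ofReal (‖y‖ ^ (-p)) ∂μ =
      ENNReal.ofReal (R ^ (-p)) * ∫⁻ y in {y : E | 1 ≤ ‖y‖}, ENNReal.ofReal (‖y‖ ^ (-p)) ∂μ :=
    calc _ = ∫⁻ y in {y : E | R ≤ ‖y‖}, ENNReal.ofReal (‖y‖ ^ (-p)) ∂(μ.map (R • ·)) := by
          rw [Measure.map_addHaar_smul μ hR.ne', Measure.restrict_smul, lintegral_smul_measure,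
            abs_of_pos (by positivity), smul_eq_mul]
      _ = ∫⁻ z in {z : E | 1 ≤ ‖z‖}, ENNReal.ofReal (‖R • z‖ ^ (-p)) ∂μ := by
          rw [setLIntegral_map (measurableSet_le measurable_const measurable_norm) (by fun_prop)
            (by fun_prop), hpre]
      _ = _ := by
          simp_rw [norm_smul, norm_of_nonneg hR.le, mul_rpow hR.le (norm_nonneg _),
            ENNReal.ofReal_mul (rpow_nonneg hR.le _)]
          exact lintegral_const_mul' _ _ ENNReal.ofReal_ne_top
  rw [sub_eq_add_neg, rpow_add hR, ENNReal.ofReal_mul (by positivity), mul_assoc, ← hscale,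
    ← mul_assoc, ← ENNReal.ofReal_mul (by positivity), rpow_natCast,
    mul_inv_cancel₀ (by positivity), ENNReal.ofReal_one, one_mul]

theorem lintegral_one_le_norm_rpow_neg_lt_top {p : ℝ} (hp : (finrank ℝ E : ℝ) < p) :
    ∫⁻ y in {y : E | 1 ≤ ‖y‖}, ENNReal.ofReal (‖y‖ ^ (-p)) ∂μ < ⊤ := by
  have hp0 : 0 < p := (Nat.cast_nonneg _).trans_lt hp
  have hbound : ∀ y ∈ {y : E | 1 ≤ ‖y‖},
      ENNReal.ofReal (‖y‖ ^ (-p)) ≤ ENNReal.ofReal (2 ^ p) * ENNReal.ofReal ((1 + ‖y‖) ^ (-p)) := by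
    intro y (hy : 1 ≤ ‖y‖)
    rw [← ENNReal.ofReal_mul (by positivity)]
    refine ENNReal.ofReal_le_ofReal ?_
    calc ‖y‖ ^ (-p) = 2 ^ p * (2 * ‖y‖) ^ (-p) := by
          rw [mul_rpow zero_le_two (norm_nonneg y), ← mul_assoc, ← rpow_add two_pos,
            add_neg_cancel, rpow_zero, one_mul]
      _ ≤ 2 ^ p * (1 + ‖y‖) ^ (-p) := by
          refine mul_le_mul_of_nonneg_left ?_ (by positivity)
          exact rpow_le_rpow_of_nonpos (by positivity) (by linarith) (by linarith)
  calc _ ≤ ∫⁻ y in {y : E | 1 ≤ ‖y‖},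
          ENNReal.ofReal (2 ^ p) * ENNReal.ofReal ((1 + ‖y‖) ^ (-p)) ∂μ :=
        setLIntegral_mono' (measurableSet_le measurable_const measurable_norm) hbound
    _ ≤ ∫⁻ y, ENNReal.ofReal (2 ^ p) * ENNReal.ofReal ((1 + ‖y‖) ^ (-p)) ∂μ :=
        setLIntegral_le_lintegral _ _
    _ = ENNReal.ofReal (2 ^ p) * ∫⁻ y, ENNReal.ofReal ((1 + ‖y‖) ^ (-p)) ∂μ :=
        lintegral_const_mul' _ _ ENNReal.ofReal_ne_top
    _ < ⊤ := ENNReal.mul_lt_top ENNReal.ofReal_lt_top (finite_integral_one_add_norm hp)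

end NormPowerTail

section Weight

variable {n : ℕ}

theorem one_le_jbr (x : EuclideanSpace ℝ (Fin n)) : 1 ≤ jbr x :=
  one_le_rpow (le_add_of_nonneg_right (by positivity)) (by norm_num)

theorem jbr_pos (x : EuclideanSpace ℝ (Fin n)) : 0 < jbr x :=
  one_pos.trans_le (one_le_jbr x)

theorem jbr_le_jbr {x z : EuclideanSpace ℝ (Fin n)} (hx : 1 ≤ ‖x‖) (h : ‖x‖ ≤ ‖z‖) :
    jbr x ≤ jbr z := by
  unfold jbr
  gcongr

theorem jbr_le_norm {x : EuclideanSpace ℝ (Fin n)} (hx : 1 ≤ ‖x‖) : jbr x ≤ ‖x‖ := by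
  have hle : 1 + (‖x‖ - 1) ^ 4 ≤ ‖x‖ ^ (4 : ℝ) := by
    rw [rpow_ofNat]
    nlinarith [mul_nonneg (sub_nonneg.2 hx) (sub_nonneg.2 hx),
      mul_nonneg (norm_nonneg x) (sub_nonneg.2 hx)]
  calc jbr x ≤ (‖x‖ ^ (4 : ℝ)) ^ ((1 : ℝ) / 4) := rpow_le_rpow (by positivity) hle (by norm_num)
    _ = ‖x‖ := by rw [← rpow_mul (norm_nonneg x)]; norm_num

variable {s : ℝ}

theorem phi_nonneg (x : EuclideanSpace ℝ (Fin n)) : 0 ≤ phi n s x := by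
  unfold phi
  split_ifs
  exacts [zero_le_one, rpow_nonneg (jbr_pos x).le _]

theorem phi_of_one_lt {x : EuclideanSpace ℝ (Fin n)} (hx : 1 < ‖x‖) :
    phi n s x = jbr x ^ (-((n : ℝ) + 2 * s)) :=
  if_neg hx.not_ge

theorem phi_le_phi_of_norm_le (hs : 0 ≤ s) {x z : EuclideanSpace ℝ (Fin n)} (h : ‖x‖ ≤ ‖z‖) :
    phi n s z ≤ phi n s x := by
  have hexp : -((n : ℝ) + 2 * s) ≤ 0 := by linarith [(n.cast_nonneg : (0 : ℝ) ≤ n)]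
  by_cases hz : ‖z‖ ≤ 1
  · rw [phi, phi, if_pos hz, if_pos (h.trans hz)]
  rw [phi_of_one_lt (not_le.1 hz)]
  by_cases hx : ‖x‖ ≤ 1
  · rw [phi, if_pos hx]
    exact rpow_le_one_of_one_le_of_nonpos (one_le_jbr z) hexp
  rw [phi_of_one_lt (not_le.1 hx)]
  exact rpow_le_rpow_of_nonpos (jbr_pos x) (jbr_le_jbr (not_le.1 hx).le h) hexp

theorem abs_phi_second_difference_le (hs : 0 ≤ s) {x y : EuclideanSpace ℝ (Fin n)}
    (hy : 2 * ‖x‖ ≤ ‖y‖) :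
    |phi n s (x + y) + phi n s (x - y) - 2 * phi n s x| ≤ 2 * phi n s x := by
  have hadd : phi n s (x + y) ≤ phi n s x := by
    refine phi_le_phi_of_norm_le hs ?_
    linarith [show ‖y‖ ≤ ‖x + y‖ + ‖x‖ by simpa using norm_sub_le (x + y) x]
  have hsub : phi n s (x - y) ≤ phi n s x := by
    refine phi_le_phi_of_norm_le hs ?_
    linarith [show ‖y‖ ≤ ‖x‖ + ‖x - y‖ by simpa using norm_sub_le x (x - y)]
  have := phi_nonneg (s := s) (x + y)
  have := phi_nonneg (s := s) (x - y)
  exact abs_le.2 ⟨by linarith, by linarith⟩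

theorem phi_mul_rpow_neg_le (hs : 0 ≤ s) {x : EuclideanSpace ℝ (Fin n)} (hx : 1 < ‖x‖) :
    phi n s x * (2 * ‖x‖) ^ (-(2 * s)) ≤ jbr x ^ (-((n : ℝ) + 4 * s)) := by
  have hjbr : jbr x ≤ 2 * ‖x‖ := (jbr_le_norm hx.le).trans (by linarith)
  calc phi n s x * (2 * ‖x‖) ^ (-(2 * s))
      ≤ jbr x ^ (-((n : ℝ) + 2 * s)) * jbr x ^ (-(2 * s)) := by
        rw [phi_of_one_lt hx]
        exact mul_le_mul_of_nonneg_left (rpow_le_rpow_of_nonpos (jbr_pos x) hjbr (by linarith))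
          (rpow_nonneg (jbr_pos x).le _)
    _ = jbr x ^ (-((n : ℝ) + 4 * s)) := by
        rw [← rpow_add (jbr_pos x)]
        ring_nf

end Weight

theorem stmt_9_general (n : ℕ) (s : ℝ) (hs : s ∈ Set.Ioo (0 : ℝ) 1) :
    ∃ C : ℝ, 0 < C ∧ ∀ x : EuclideanSpace ℝ (Fin n), 2 ≤ ‖x‖ →
      ∫⁻ y in {y : EuclideanSpace ℝ (Fin n) | 2 * ‖x‖ ≤ ‖y‖},
          ENNReal.ofReal
            (|phi n s (x + y) + phi n s (x - y) - 2 * phi n s x| /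
              ‖y‖ ^ ((n : ℝ) + 2 * s))
        ≤ ENNReal.ofReal (C * jbr x ^ (-((n : ℝ) + 4 * s))) := by
  obtain ⟨hs, -⟩ := hs
  set p : ℝ := (n : ℝ) + 2 * s
  set I := ∫⁻ y in {y : EuclideanSpace ℝ (Fin n) | 1 ≤ ‖y‖}, ENNReal.ofReal (‖y‖ ^ (-p))
  have hI : I < ⊤ := lintegral_one_le_norm_rpow_neg_lt_top volume
    (by rw [finrank_euclideanSpace_fin]; linarith)
  refine ⟨2 * I.toReal + 1, by positivity, fun x hx => ?_⟩
  have hpoint : ∀ y ∈ {y : EuclideanSpace ℝ (Fin n) | 2 * ‖x‖ ≤ ‖y‖},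
      ENNReal.ofReal (|phi n s (x + y) + phi n s (x - y) - 2 * phi n s x| / ‖y‖ ^ p) ≤
        ENNReal.ofReal (2 * phi n s x) * ENNReal.ofReal (‖y‖ ^ (-p)) := by
    intro y (hy : 2 * ‖x‖ ≤ ‖y‖)
    rw [← ENNReal.ofReal_mul (by linarith [phi_nonneg (s := s) x]), rpow_neg (norm_nonneg y),
      ← div_eq_mul_inv]
    gcongr
    exact abs_phi_second_difference_le hs.le hy
  have hdecay := phi_mul_rpow_neg_le hs.le (x := x) (by linarith)
  have hphi := phi_nonneg (s := s) x
  calc _ ≤ ∫⁻ y in {y : EuclideanSpace ℝ (Fin n) | 2 * ‖x‖ ≤ ‖y‖},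
          ENNReal.ofReal (2 * phi n s x) * ENNReal.ofReal (‖y‖ ^ (-p)) :=
        setLIntegral_mono' (measurableSet_le measurable_const measurable_norm) hpoint
    _ = ENNReal.ofReal (2 * phi n s x) * (ENNReal.ofReal ((2 * ‖x‖) ^ (-(2 * s))) * I) := by
        rw [lintegral_const_mul' _ _ ENNReal.ofReal_ne_top,
          lintegral_norm_rpow_neg_tail volume p (by linarith), finrank_euclideanSpace_fin,
          show (n : ℝ) - p = -(2 * s) by ring]
    _ = ENNReal.ofReal (2 * (phi n s x * (2 * ‖x‖) ^ (-(2 * s))) * I.toReal) := by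
        rw [← ENNReal.ofReal_toReal hI.ne, ← mul_assoc, ← ENNReal.ofReal_mul (by positivity),
          ← ENNReal.ofReal_mul (by positivity), ENNReal.toReal_ofReal ENNReal.toReal_nonneg]
        ring_nf
    _ ≤ ENNReal.ofReal ((2 * I.toReal + 1) * jbr x ^ (-((n : ℝ) + 4 * s))) := by
        refine ENNReal.ofReal_le_ofReal ?_
        have hI0 : 0 ≤ I.toReal := ENNReal.toReal_nonneg
        have hJ0 : 0 ≤ jbr x ^ (-((n : ℝ) + 4 * s)) := rpow_nonneg (jbr_pos x).le _
        nlinarith [mul_le_mul_of_nonneg_right hdecay hI0]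

/-- For `n ≥ 1` and `s ∈ (0,1)`, there is a constant `C > 0` (depending only on
`n` and `s`) such that for every `x` with `|x| ≥ 2`,
`∫_{|y| ≥ 2|x|} |φ(x+y) + φ(x-y) - 2φ(x)| / |y|^{n+2s} dy ≤ C ⟨x⟩^{-n-4s}`. -/
theorem stmt_9 (n : ℕ) (hn : 1 ≤ n) (s : ℝ) (hs : s ∈ Set.Ioo (0 : ℝ) 1) :
    ∃ C : ℝ, 0 < C ∧ ∀ x : EuclideanSpace ℝ (Fin n), 2 ≤ ‖x‖ →
      ∫⁻ y in {y : EuclideanSpace ℝ (Fin n) | 2 * ‖x‖ ≤ ‖y‖},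
          ENNReal.ofReal
            (|phi n s (x + y) + phi n s (x - y) - 2 * phi n s x| /
              ‖y‖ ^ ((n : ℝ) + 2 * s))
        ≤ ENNReal.ofReal (C * jbr x ^ (-((n : ℝ) + 4 * s))) :=
  stmt_9_general n s hs
end
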